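/- For any set X and any finite-dimensional nonarchimedean Banach space E over a complete nonarchimedean field K, the canonical map ℓ∞(X) ⊗̂ E → ℓ∞(X, E) induced by (φ, e) ↦ (x ↦ φ(x)·e) is an isometric isomorphism. -/
import Mathlib

open BoundedContinuousFunction Module Metric

section Ortho

variable {K : Type*} [NontriviallyNormedField K] [CompleteSpace K]

/-- α-orthogonal decompositions exist in finite-dimensional ultrametric spaces. -/
private lemma ortho_aux (n : ℕ) (E : Type*) [NormedAddCommGroup E] [NormedSpace K E]
    [IsUltrametricDist E] [FiniteDimensional K E] (hE : finrank K E = n) :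
    ∀ C : ℝ, 1 < C →
    ∃ (v : Fin n → E) (ψ : Fin n → E →L[K] K),
      (∀ y : E, ∑ j, ψ j y • v j = y) ∧ (∀ j (y : E), ‖ψ j y‖ * ‖v j‖ ≤ C * ‖y‖) := by
  induction n generalizing E with
  | zero =>
    intro C hC
    refine ⟨Fin.elim0, Fin.elim0, fun y => ?_, fun j => j.elim0⟩
    have : Subsingleton E := finrank_zero_iff.mp hE
    simp [Subsingleton.elim y 0]
  | succ n IH =>
    intro C hC
    have hC0 : (0:ℝ) < C := lt_trans one_pos hC
    set C' := Real.sqrt C with hC'def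
    have hC'1 : 1 < C' := by
      rw [show (1:ℝ) = Real.sqrt 1 by simp]
      exact Real.sqrt_lt_sqrt (by norm_num) hC
    have hC'0 : (0:ℝ) < C' := lt_trans one_pos hC'1
    have hC'sq : C' * C' = C := Real.mul_self_sqrt hC0.le
    have hC'C : C' ≤ C := by nlinarith
    let bE := finBasisOfFinrankEq K E hE
    set e := bE (Fin.last n) with he
    set F : Submodule K E := Submodule.span K (Set.range (bE ∘ Fin.castSucc)) with hF
    have heF : e ∉ F := by
      rw [hF, Set.range_comp]
      apply bE.linearIndependent.notMem_span_image
      rintro ⟨j, hj⟩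
      exact (Fin.castSucc_lt_last j).ne hj
    have hFdim : finrank K F = n := by
      rw [hF, finrank_span_eq_card (bE.linearIndependent.comp _ (Fin.castSucc_injective n))]
      simp
    have hFclosed : IsClosed (F : Set E) := F.closed_of_finiteDimensional
    have hFne : (F : Set E).Nonempty := ⟨0, F.zero_mem⟩
    set d := infDist e (F : Set E) with hd
    have hd0 : 0 < d := (hFclosed.notMem_iff_infDist_pos hFne).mp heF
    obtain ⟨f, hfF, hf⟩ : ∃ f ∈ (F : Set E), dist e f < C' * d := by
      rw [← infDist_lt_iff hFne]
      nlinarith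
    rw [SetLike.mem_coe] at hfF
    set e' := e - f with he'
    have he'norm : ‖e'‖ ≤ C' * d := by rw [he', ← dist_eq_norm]; exact hf.le
    have hlow : ∀ (a : K) (w : E), w ∈ F → ‖a‖ * d ≤ ‖a • e' + w‖ := by
      intro a w hw
      rcases eq_or_ne a 0 with rfl | ha
      · simpa using norm_nonneg w
      · have key : a • e' + w = a • (e - (f - a⁻¹ • w)) := by
          rw [he', smul_sub, smul_sub, smul_sub, smul_smul, mul_inv_cancel₀ ha, one_smul]
          abel
        rw [key, norm_smul]
        have hg : f - a⁻¹ • w ∈ F := sub_mem hfF (F.smul_mem _ hw)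
        have h1 : d ≤ dist e (f - a⁻¹ • w) := infDist_le_dist_of_mem hg
        rw [dist_eq_norm] at h1
        exact mul_le_mul_of_nonneg_left h1 (norm_nonneg a)
    set ψ₀ : E →L[K] K := LinearMap.toContinuousLinearMap (bE.coord (Fin.last n)) with hψ₀
    have hψ₀app : ∀ y : E, ψ₀ y = bE.repr y (Fin.last n) := fun y => rfl
    have hmem : ∀ y : E, y - ψ₀ y • e ∈ F := by
      intro y
      have h2 := bE.sum_repr y
      rw [Fin.sum_univ_castSucc] at h2
      have h3 : (∑ i : Fin n, bE.repr y (Fin.castSucc i) • bE (Fin.castSucc i))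
          = y - bE.repr y (Fin.last n) • bE (Fin.last n) := eq_sub_of_add_eq h2
      have h4 : y - ψ₀ y • e
          = ∑ i : Fin n, bE.repr y (Fin.castSucc i) • bE (Fin.castSucc i) := by
        rw [h3, hψ₀app, he]
      rw [h4]
      exact Submodule.sum_mem _ fun i _ =>
        Submodule.smul_mem _ _ (Submodule.subset_span ⟨i, rfl⟩)
    have hmem' : ∀ y : E, y - ψ₀ y • e' ∈ F := by
      intro y
      have h5 : y - ψ₀ y • e' = (y - ψ₀ y • e) + ψ₀ y • f := by
        rw [he', smul_sub]; abel
      rw [h5]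
      exact add_mem (hmem y) (F.smul_mem _ hfF)
    have hψ₀bound : ∀ y : E, ‖ψ₀ y‖ * ‖e'‖ ≤ C' * ‖y‖ := by
      intro y
      have h1 : ‖ψ₀ y‖ * d ≤ ‖y‖ := by
        have h6 := hlow (ψ₀ y) (y - ψ₀ y • e') (hmem' y)
        have heq : ψ₀ y • e' + (y - ψ₀ y • e') = y := by abel
        rwa [heq] at h6
      calc ‖ψ₀ y‖ * ‖e'‖ ≤ ‖ψ₀ y‖ * (C' * d) :=
            mul_le_mul_of_nonneg_left he'norm (norm_nonneg _)
        _ = C' * (‖ψ₀ y‖ * d) := by ring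
        _ ≤ C' * ‖y‖ := mul_le_mul_of_nonneg_left h1 hC'0.le
    let Pl : E →ₗ[K] F :=
      LinearMap.codRestrict F (LinearMap.id - (ψ₀ : E →ₗ[K] K).smulRight e')
        (fun y => by simpa using hmem' y)
    let P : E →L[K] F := LinearMap.toContinuousLinearMap Pl
    have hP : ∀ y : E, (P y : E) = y - ψ₀ y • e' := fun y => rfl
    obtain ⟨v', ψ', hrec', hbd'⟩ := IH F hFdim C' hC'1
    refine ⟨Fin.snoc (fun j => (v' j : E)) e',
      Fin.snoc (fun j => (ψ' j).comp P) ψ₀, ?_, ?_⟩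
    · intro y
      rw [Fin.sum_univ_castSucc]
      simp only [Fin.snoc_castSucc, Fin.snoc_last, ContinuousLinearMap.comp_apply]
      have hco : ((((∑ j, ψ' j (P y) • v' j : F)) : E))
          = ∑ j : Fin n, ψ' j (P y) • (v' j : E) := by
        norm_cast
      rw [← hco, hrec' (P y), hP y]
      abel
    · intro i y
      refine Fin.lastCases ?_ (fun j => ?_) i
      · simp only [Fin.snoc_last]
        calc ‖ψ₀ y‖ * ‖e'‖ ≤ C' * ‖y‖ := hψ₀bound y
          _ ≤ C * ‖y‖ := mul_le_mul_of_nonneg_right hC'C (norm_nonneg y)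
      · simp only [Fin.snoc_castSucc, ContinuousLinearMap.comp_apply]
        have h1 : ‖ψ' j (P y)‖ * ‖(v' j : E)‖ ≤ C' * ‖P y‖ := hbd' j (P y)
        have h2 : ‖P y‖ ≤ C' * ‖y‖ := by
          have hmax : ‖(P y : E)‖ ≤ max ‖y‖ ‖ψ₀ y • e'‖ := by
            rw [hP]
            have := IsUltrametricDist.norm_add_le_max y (-(ψ₀ y • e'))
            simpa [sub_eq_add_neg] using this
          have h3 : ‖ψ₀ y • e'‖ ≤ C' * ‖y‖ := by rw [norm_smul]; exact hψ₀bound y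
          have h4 : ‖y‖ ≤ C' * ‖y‖ := le_mul_of_one_le_left (norm_nonneg y) hC'1.le
          calc ‖P y‖ = ‖(P y : E)‖ := rfl
            _ ≤ max ‖y‖ ‖ψ₀ y • e'‖ := hmax
            _ ≤ C' * ‖y‖ := max_le h4 h3
        calc ‖ψ' j (P y)‖ * ‖(v' j : E)‖ ≤ C' * ‖P y‖ := h1
          _ ≤ C' * (C' * ‖y‖) := mul_le_mul_of_nonneg_left h2 hC'0.le
          _ = C * ‖y‖ := by rw [← hC'sq]; ring

end Ortho

section BL

variable (K : Type*) [NontriviallyNormedField K]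
  (X : Type*) [TopologicalSpace X] [DiscreteTopology X]
  (E : Type*) [NormedAddCommGroup E] [NormedSpace K E]

/-- The canonical bilinear map `ℓ∞(X) × E → ℓ∞(X, E)`. -/
private noncomputable def bL : (X →ᵇ K) →L[K] E →L[K] (X →ᵇ E) :=
  LinearMap.mkContinuous₂
    (LinearMap.mk₂ K
      (fun φ e => ofNormedAddCommGroup (fun x => φ x • e) continuous_of_discreteTopology
        (‖φ‖ * ‖e‖) (fun x => by
          rw [norm_smul]
          exact mul_le_mul_of_nonneg_right (φ.norm_coe_le_norm x) (norm_nonneg e)))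
      (fun φ₁ φ₂ e => by ext x; simp [add_smul])
      (fun c φ e => by ext x; simp [mul_smul])
      (fun φ e₁ e₂ => by ext x; simp [smul_add])
      (fun c φ e => by ext x; simp only [coe_ofNormedAddCommGroup, coe_smul, Pi.smul_apply]; exact (smul_comm c (φ x) e).symm))
    1
    (fun φ e => by
      have h := norm_ofNormedAddCommGroup_le (f := fun x : X => φ x • e)
        continuous_of_discreteTopology
        (mul_nonneg (norm_nonneg φ) (norm_nonneg e)) (fun x => by
          rw [norm_smul]
          exact mul_le_mul_of_nonneg_right (φ.norm_coe_le_norm x) (norm_nonneg e))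
      simpa [one_mul] using h)

variable {K X E}

private lemma bL_apply (φ : X →ᵇ K) (e : E) (x : X) :
    bL K X E φ e x = φ x • e := rfl

private lemma norm_bL_le (φ : X →ᵇ K) (e : E) :
    ‖bL K X E φ e‖ ≤ ‖φ‖ * ‖e‖ := by
  exact norm_ofNormedAddCommGroup_le (f := fun x : X => φ x • e)
    continuous_of_discreteTopology
    (mul_nonneg (norm_nonneg φ) (norm_nonneg e)) (fun x => by
      rw [norm_smul]
      exact mul_le_mul_of_nonneg_right (φ.norm_coe_le_norm x) (norm_nonneg e))

private lemma norm_bL (φ : X →ᵇ K) (e : E) :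
    ‖bL K X E φ e‖ = ‖φ‖ * ‖e‖ := by
  refine le_antisymm (norm_bL_le φ e) ?_
  rcases eq_or_ne e 0 with rfl | he
  · rw [map_zero, norm_zero, norm_zero, mul_zero]
  · have he0 : (0:ℝ) < ‖e‖ := norm_pos_iff.mpr he
    rw [← le_div_iff₀ he0]
    refine (BoundedContinuousFunction.norm_le (by positivity)).mpr fun x => ?_
    rw [le_div_iff₀ he0]
    calc ‖φ x‖ * ‖e‖ = ‖bL K X E φ e x‖ := by
          rw [bL_apply, norm_smul]
      _ ≤ ‖bL K X E φ e‖ := (bL K X E φ e).norm_coe_le_norm x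

end BL

/-- For a set `X` and a finite-dimensional nonarchimedean Banach space `E` over a complete
nonarchimedean field `K`, the canonical bilinear map `ℓ∞(X) × E → ℓ∞(X, E)`,
`(φ, e) ↦ (x ↦ φ x • e)`, exhibits `ℓ∞(X, E)` (isometrically) as the completed projective
tensor product `ℓ∞(X, K) ⊗̂ E`. -/
theorem stmt2.{u} {K : Type*} [NontriviallyNormedField K] [CompleteSpace K] [IsUltrametricDist K]
    {X : Type*} [TopologicalSpace X] [DiscreteTopology X]
    {E : Type*} [NormedAddCommGroup E] [NormedSpace K E] [IsUltrametricDist E]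
    [FiniteDimensional K E] :
    ∃ b : (X →ᵇ K) →L[K] E →L[K] (X →ᵇ E),
      (∀ (φ : X →ᵇ K) (e : E) (x : X), b φ e x = φ x • e) ∧
      (∀ (φ : X →ᵇ K) (e : E), ‖b φ e‖ = ‖φ‖ * ‖e‖) ∧
      (∀ (Z : Type u) [NormedAddCommGroup Z] [NormedSpace K Z] [CompleteSpace Z]
          [IsUltrametricDist Z] (B : (X →ᵇ K) →L[K] E →L[K] Z),
        ∃! T : (X →ᵇ E) →L[K] Z,
          (∀ (φ : X →ᵇ K) (e : E), T (b φ e) = B φ e) ∧ ‖T‖ = ‖B‖) := by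
  classical
  refine ⟨bL K X E, bL_apply, norm_bL, ?_⟩
  intro Z _ _ _ _ B
  -- decomposition of any bounded function along an orthogonal-ish system
  have hdecomp : ∀ (m : ℕ) (v : Fin m → E) (ψ : Fin m → E →L[K] K),
      (∀ y : E, ∑ j, ψ j y • v j = y) → ∀ f : X →ᵇ E,
      f = ∑ j, bL K X E ((ψ j).compLeftContinuousBounded X f) (v j) := by
    intro m v ψ hrec f
    ext x
    simp only [BoundedContinuousFunction.coe_sum, Finset.sum_apply, bL_apply,
      ContinuousLinearMap.compLeftContinuousBounded_apply]
    exact (hrec (f x)).symm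
  obtain ⟨v, ψ, hrec, -⟩ := ortho_aux (K := K) (finrank K E) E rfl 2 one_lt_two
  set T : (X →ᵇ E) →L[K] Z :=
    ∑ j, (B.flip (v j)).comp ((ψ j).compLeftContinuousBounded X) with hT
  have hTapp : ∀ f : X →ᵇ E,
      T f = ∑ j, B ((ψ j).compLeftContinuousBounded X f) (v j) := by
    intro f
    rw [hT]
    simp [ContinuousLinearMap.sum_apply]
  -- T agrees with B on elementary tensors
  have hTb : ∀ (φ : X →ᵇ K) (e : E), T (bL K X E φ e) = B φ e := by
    intro φ e
    rw [hTapp]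
    have hcomp : ∀ j : Fin (finrank K E),
        (ψ j).compLeftContinuousBounded X (bL K X E φ e) = ψ j e • φ := by
      intro j
      ext x
      simp [bL_apply, mul_comm]
    calc (∑ j, B ((ψ j).compLeftContinuousBounded X (bL K X E φ e)) (v j))
        = ∑ j, B φ (ψ j e • v j) := by
          refine Finset.sum_congr rfl fun j _ => ?_
          rw [hcomp j, map_smul, ContinuousLinearMap.smul_apply,
            (B φ).map_smul]
      _ = B φ (∑ j, ψ j e • v j) := (map_sum (B φ) _ _).symm
      _ = B φ e := by rw [hrec e]
  -- for uniqueness, any T' agreeing on elementary tensors equals T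
  have huniq : ∀ T' : (X →ᵇ E) →L[K] Z,
      (∀ (φ : X →ᵇ K) (e : E), T' (bL K X E φ e) = B φ e) → T' = T := by
    intro T' hT'
    ext f
    have hf := hdecomp _ v ψ hrec f
    calc T' f = T' (∑ j, bL K X E ((ψ j).compLeftContinuousBounded X f) (v j)) := by rw [← hf]
      _ = ∑ j, B ((ψ j).compLeftContinuousBounded X f) (v j) := by
          rw [map_sum]; exact Finset.sum_congr rfl fun j _ => hT' _ _
      _ = T f := (hTapp f).symm
  -- norm bound : ‖T f‖ ≤ C * (‖B‖ * ‖f‖) for every C > 1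
  have hTf : ∀ (f : X →ᵇ E) (C : ℝ), 1 < C → ‖T f‖ ≤ C * (‖B‖ * ‖f‖) := by
    intro f C hC
    obtain ⟨v', ψ', hrec', hbd'⟩ := ortho_aux (K := K) (finrank K E) E rfl C hC
    have hC0 : (0:ℝ) < C := lt_trans one_pos hC
    have hTF : T f = ∑ j, B ((ψ' j).compLeftContinuousBounded X f) (v' j) := by
      conv_lhs => rw [hdecomp _ v' ψ' hrec' f]
      rw [map_sum]
      exact Finset.sum_congr rfl fun j _ => hTb _ _
    rw [hTF]
    refine IsUltrametricDist.norm_sum_le_of_forall_le_of_nonneg (by positivity) ?_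
    intro j _
    have h1 : ‖(ψ' j).compLeftContinuousBounded X f‖ * ‖v' j‖ ≤ C * ‖f‖ := by
      rcases eq_or_ne (v' j) 0 with h | h
      · rw [h, norm_zero, mul_zero]; positivity
      · have hv : 0 < ‖v' j‖ := norm_pos_iff.mpr h
        rw [← le_div_iff₀ hv]
        refine (BoundedContinuousFunction.norm_le (by positivity)).mpr fun x => ?_
        rw [le_div_iff₀ hv, ContinuousLinearMap.compLeftContinuousBounded_apply]
        calc ‖ψ' j (f x)‖ * ‖v' j‖ ≤ C * ‖f x‖ := hbd' j (f x)
          _ ≤ C * ‖f‖ := mul_le_mul_of_nonneg_left (f.norm_coe_le_norm x) hC0.le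
    calc ‖B ((ψ' j).compLeftContinuousBounded X f) (v' j)‖
        ≤ ‖B‖ * ‖(ψ' j).compLeftContinuousBounded X f‖ * ‖v' j‖ := B.le_opNorm₂ _ _
      _ = ‖B‖ * (‖(ψ' j).compLeftContinuousBounded X f‖ * ‖v' j‖) := mul_assoc _ _ _
      _ ≤ ‖B‖ * (C * ‖f‖) := mul_le_mul_of_nonneg_left h1 (norm_nonneg B)
      _ = C * (‖B‖ * ‖f‖) := by ring
  have hle : ‖T‖ ≤ ‖B‖ := by
    refine T.opNorm_le_bound (norm_nonneg B) fun f => ?_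
    refine le_of_forall_gt_imp_ge_of_dense fun c hc => ?_
    rcases eq_or_lt_of_le (by positivity : (0:ℝ) ≤ ‖B‖ * ‖f‖) with h0 | h0
    · have := hTf f 2 one_lt_two
      rw [← h0] at this hc
      linarith
    · have hC1 : 1 < c / (‖B‖ * ‖f‖) := (one_lt_div h0).mpr hc
      have := hTf f _ hC1
      rwa [div_mul_cancel₀ _ (ne_of_gt h0)] at this
  have hge : ‖B‖ ≤ ‖T‖ := by
    refine B.opNorm_le_bound (norm_nonneg T) fun φ => ?_
    refine (B φ).opNorm_le_bound (by positivity) fun e => ?_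
    calc ‖B φ e‖ = ‖T (bL K X E φ e)‖ := by rw [hTb]
      _ ≤ ‖T‖ * ‖bL K X E φ e‖ := T.le_opNorm _
      _ = ‖T‖ * (‖φ‖ * ‖e‖) := by rw [norm_bL]
      _ = ‖T‖ * ‖φ‖ * ‖e‖ := by ring
  exact ⟨T, ⟨hTb, le_antisymm hle hge⟩, fun T' hT' => huniq T' hT'.1⟩
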